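/- arXiv:1903.07617 — 3 statements merged into one kernel-verified Lean document; each statement's English description precedes it below -/
import Mathlib

section
/- Let n ∈ ℝ² be a fixed unit vector, c ∈ ℝ, and assume u, v, p are C¹ on an open set O ⊆ ℝ²×ℝ×ℝ and satisfy the horizontal momentum equation ρ(u_t + (u·∇)u + v u_y) + ∇p = 0, with u·n = 0 on a relatively open wet-wall set S ⊆ O ∩ {x·n = c}. Let x₀ ∈ ℝ² with x₀·n = c, let η be a C¹ free surface defined on an open neighborhood D ⊆ ℝ² of x₀ and times in an interval I, with (x, η(x,t), t) ∈ O for x ∈ D, and suppose the dynamic condition p(x, η(x,t), t) = 0 holds for all x ∈ D, t ∈ I. If (x₀, η(x₀,t), t) ∈ S, then p_y(x₀, η(x₀,t), t) · (∇η(x₀,t)·n) = 0; in particular, if p_y(x₀, η(x₀,t), t) ≠ 0, then ∂η/∂n := ∇η·n = 0 at (x₀,t), i.e. the free surface meets the flat vertical wall at a right angle. -/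
/-!
On the wall, the flow direction `(u, v, 1)` is tangent to the plane `x·n = c` because `u·n = 0`, so
`u·n` stays zero along it and its material derivative vanishes. Dotting the momentum equation with `n`
then gives `∇p·n = 0` at the wall. Differentiating the dynamic condition `p(x, η(x,t), t) = 0` in the
direction `n` gives `∇p·n + p_y (∇η·n) = 0`, hence `p_y (∇η·n) = 0`.
-/

noncomputable section

open Filter Topology

/-- Space-time points `((x₁,x₂), y, t)`: horizontal position, height, time. -/
abbrev Pt : Type := (ℝ × ℝ) × ℝ × ℝ

/-- Partial derivative `∂_{x₁}`. -/
noncomputable def dX1 (f : Pt → ℝ) (q : Pt) : ℝ :=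
  fderiv ℝ f q (((1 : ℝ), (0 : ℝ)), (0 : ℝ), (0 : ℝ))

/-- Partial derivative `∂_{x₂}`. -/
noncomputable def dX2 (f : Pt → ℝ) (q : Pt) : ℝ :=
  fderiv ℝ f q (((0 : ℝ), (1 : ℝ)), (0 : ℝ), (0 : ℝ))

/-- Partial derivative `∂_y`. -/
noncomputable def dY (f : Pt → ℝ) (q : Pt) : ℝ :=
  fderiv ℝ f q (((0 : ℝ), (0 : ℝ)), (1 : ℝ), (0 : ℝ))

/-- Partial derivative `∂_t`. -/
noncomputable def dT (f : Pt → ℝ) (q : Pt) : ℝ :=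
  fderiv ℝ f q (((0 : ℝ), (0 : ℝ)), (0 : ℝ), (1 : ℝ))

/-- Spatial partial derivative `∂_{x₁}` of the free surface `η(x,t)` at fixed time. -/
noncomputable def gX1 (η : (ℝ × ℝ) × ℝ → ℝ) (x : ℝ × ℝ) (t : ℝ) : ℝ :=
  fderiv ℝ (fun x' => η (x', t)) x ((1 : ℝ), (0 : ℝ))

/-- Spatial partial derivative `∂_{x₂}` of the free surface `η(x,t)` at fixed time. -/
noncomputable def gX2 (η : (ℝ × ℝ) × ℝ → ℝ) (x : ℝ × ℝ) (t : ℝ) : ℝ :=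
  fderiv ℝ (fun x' => η (x', t)) x ((0 : ℝ), (1 : ℝ))

theorem fderiv_apply_eq_zero_of_eventually_zero_along_line {𝕜 E F : Type*}
    [NontriviallyNormedField 𝕜] [NormedAddCommGroup E] [NormedSpace 𝕜 E]
    [NormedAddCommGroup F] [NormedSpace 𝕜 F] {f : E → F} {x v : E}
    (hf : DifferentiableAt 𝕜 f x) (h : (fun s : 𝕜 => f (x + s • v)) =ᶠ[𝓝 0] fun _ => 0) :
    fderiv 𝕜 f x v = 0 := by
  rw [← hf.lineDeriv_eq_fderiv, lineDeriv, h.deriv_eq, deriv_const]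

theorem fderiv_apply_graph_eq_zero_of_eventually_zero {𝕜 E F G H : Type*}
    [NontriviallyNormedField 𝕜] [NormedAddCommGroup E] [NormedSpace 𝕜 E]
    [NormedAddCommGroup F] [NormedSpace 𝕜 F] [NormedAddCommGroup G] [NormedSpace 𝕜 G]
    [NormedAddCommGroup H] [NormedSpace 𝕜 H] {p : E × F × G → H} {g : E → F} {x : E} {t : G}
    (hp : DifferentiableAt 𝕜 p (x, g x, t)) (hg : DifferentiableAt 𝕜 g x)
    (h : (fun x' => p (x', g x', t)) =ᶠ[𝓝 x] fun _ => 0) (m : E) :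
    fderiv 𝕜 p (x, g x, t) (m, fderiv 𝕜 g x m, 0) = 0 := by
  have hgraph : HasFDerivAt (fun x' => (x', g x', t))
      ((ContinuousLinearMap.id 𝕜 E).prod ((fderiv 𝕜 g x).prod 0)) x :=
    (hasFDerivAt_id x).prodMk (hg.hasFDerivAt.prodMk (hasFDerivAt_const t x))
  have hcomp : fderiv 𝕜 (fun x' => p (x', g x', t)) x = _ :=
    (hp.hasFDerivAt.comp x hgraph).fderiv
  rw [h.fderiv_eq, fderiv_fun_const] at hcomp
  simpa using (DFunLike.congr_fun hcomp m).symm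

theorem fderiv_apply_eq_partials (f : Pt → ℝ) (q : Pt) (a b c d : ℝ) :
    fderiv ℝ f q ((a, b), c, d) = a * dX1 f q + b * dX2 f q + c * dY f q + d * dT f q := by
  have hbasis : (((a, b), c, d) : Pt) = a • (((1, 0), 0, 0) : Pt) + b • (((0, 1), 0, 0) : Pt)
      + c • (((0, 0), 1, 0) : Pt) + d • (((0, 0), 0, 1) : Pt) := by
    simp
  rw [hbasis]
  simp only [map_add, map_smul, smul_eq_mul, dX1, dX2, dY, dT]

theorem fderiv_slice_apply_eq_partials (η : (ℝ × ℝ) × ℝ → ℝ) (x : ℝ × ℝ) (t a b : ℝ) :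
    fderiv ℝ (fun x' => η (x', t)) x (a, b) = a * gX1 η x t + b * gX2 η x t := by
  have hbasis : ((a, b) : ℝ × ℝ) = a • ((1, 0) : ℝ × ℝ) + b • ((0, 1) : ℝ × ℝ) := by
    simp
  rw [hbasis]
  simp only [map_add, map_smul, smul_eq_mul, gX1, gX2]

def flatWall (n : ℝ × ℝ) (c : ℝ) : Set Pt :=
  {q | q.1.1 * n.1 + q.1.2 * n.2 = c}

def materialDeriv (u : Pt → ℝ × ℝ) (v f : Pt → ℝ) (q : Pt) : ℝ :=
  dT f q + (u q).1 * dX1 f q + (u q).2 * dX2 f q + v q * dY f q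

theorem eventually_add_smul_mem_flatWall {n : ℝ × ℝ} {c : ℝ} {U : Set Pt} (hU : IsOpen U)
    {q w : Pt} (hq : q ∈ U ∩ flatWall n c) (hw : w.1.1 * n.1 + w.1.2 * n.2 = 0) :
    ∀ᶠ s : ℝ in 𝓝 0, q + s • w ∈ U ∩ flatWall n c := by
  have hline : Continuous fun s : ℝ => q + s • w := by fun_prop
  have hU₀ : U ∈ 𝓝 (q + (0 : ℝ) • w) := by simpa using hU.mem_nhds hq.1
  filter_upwards [hline.continuousAt.preimage_mem_nhds hU₀] with s hs
  refine ⟨hs, ?_⟩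
  have hq₀ : q.1.1 * n.1 + q.1.2 * n.2 = c := hq.2
  show (q + s • w).1.1 * n.1 + (q + s • w).1.2 * n.2 = c
  simp only [Prod.fst_add, Prod.smul_fst, Prod.smul_snd, Prod.snd_add, smul_eq_mul]
  linear_combination hq₀ + s * hw

theorem normal_materialDeriv_eq_zero_of_mem_flatWall {n : ℝ × ℝ} {c : ℝ} {U : Set Pt}
    (hU : IsOpen U) {u : Pt → ℝ × ℝ} {v : Pt → ℝ} {q : Pt} (hu : DifferentiableAt ℝ u q)
    (hq : q ∈ U ∩ flatWall n c)
    (himp : ∀ z ∈ U ∩ flatWall n c, (u z).1 * n.1 + (u z).2 * n.2 = 0) :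
    n.1 * materialDeriv u v (fun z => (u z).1) q
      + n.2 * materialDeriv u v (fun z => (u z).2) q = 0 := by
  set w : Pt := (((u q).1, (u q).2), v q, 1)
  have hu₁ : DifferentiableAt ℝ (fun z => (u z).1) q := hu.fst
  have hu₂ : DifferentiableAt ℝ (fun z => (u z).2) q := hu.snd
  have hnormal : fderiv ℝ (fun z => (u z).1 * n.1 + (u z).2 * n.2) q w = 0 :=
    fderiv_apply_eq_zero_of_eventually_zero_along_line (by fun_prop) <| by
      filter_upwards [eventually_add_smul_mem_flatWall (w := w) hU hq (himp q hq)] with s hs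
      exact himp _ hs
  rw [fderiv_fun_add (by fun_prop) (by fun_prop), fderiv_mul_const hu₁, fderiv_mul_const hu₂]
    at hnormal
  simp only [_root_.add_apply, _root_.smul_apply, smul_eq_mul, w,
    fderiv_apply_eq_partials] at hnormal
  unfold materialDeriv
  linear_combination hnormal

theorem free_surface_right_angle_flat_wall_general
    (ρ : ℝ)
    (n : ℝ × ℝ) (c : ℝ)
    (O : Set Pt) (hO : IsOpen O)
    (u : Pt → ℝ × ℝ) (v p : Pt → ℝ)
    (hu : ContDiffOn ℝ 1 u O) (hp : ContDiffOn ℝ 1 p O)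
    (hmom1 : ∀ q ∈ O,
      ρ * (dT (fun z => (u z).1) q
        + (u q).1 * dX1 (fun z => (u z).1) q + (u q).2 * dX2 (fun z => (u z).1) q
        + v q * dY (fun z => (u z).1) q) + dX1 p q = 0)
    (hmom2 : ∀ q ∈ O,
      ρ * (dT (fun z => (u z).2) q
        + (u q).1 * dX1 (fun z => (u z).2) q + (u q).2 * dX2 (fun z => (u z).2) q
        + v q * dY (fun z => (u z).2) q) + dX2 p q = 0)
    (S : Set Pt)
    (hSrel : ∃ U : Set Pt, IsOpen U ∧
      S = U ∩ {q : Pt | q.1.1 * n.1 + q.1.2 * n.2 = c})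
    (himp : ∀ q ∈ S, (u q).1 * n.1 + (u q).2 * n.2 = 0)
    -- the free surface `η` near the wall point `x₀`
    (x₀ : ℝ × ℝ)
    (D : Set (ℝ × ℝ)) (hD : IsOpen D) (hx₀D : x₀ ∈ D)
    (I : Set ℝ)
    (η : (ℝ × ℝ) × ℝ → ℝ) (hη : ContDiffOn ℝ 1 η (D ×ˢ I))
    (hsurfO : ∀ x ∈ D, ∀ t ∈ I, ((x, η (x, t), t) : Pt) ∈ O)
    -- the dynamic free-surface condition
    (hdyn : ∀ x ∈ D, ∀ t ∈ I, p (x, η (x, t), t) = 0) :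
    ∀ t ∈ I, ((x₀, η (x₀, t), t) : Pt) ∈ S →
      dY p (x₀, η (x₀, t), t) * (gX1 η x₀ t * n.1 + gX2 η x₀ t * n.2) = 0
      ∧ (dY p (x₀, η (x₀, t), t) ≠ 0 →
          gX1 η x₀ t * n.1 + gX2 η x₀ t * n.2 = 0) := by
  intro t ht hS
  obtain ⟨U, hU, rfl⟩ := hSrel
  set q₀ : Pt := (x₀, η (x₀, t), t)
  have hq₀O : O ∈ 𝓝 q₀ := hO.mem_nhds (hsurfO x₀ hx₀D t ht)
  have hnormal_accel := normal_materialDeriv_eq_zero_of_mem_flatWall (v := v) hU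
    ((hu.differentiableOn one_ne_zero).differentiableAt hq₀O) hS himp
  have hnormal_grad : n.1 * dX1 p q₀ + n.2 * dX2 p q₀ = 0 := by
    unfold materialDeriv at hnormal_accel
    linear_combination n.1 * hmom1 q₀ (mem_of_mem_nhds hq₀O)
      + n.2 * hmom2 q₀ (mem_of_mem_nhds hq₀O) - ρ * hnormal_accel
  have hslice : DifferentiableAt ℝ (fun x => η (x, t)) x₀ :=
    ((hη.differentiableOn one_ne_zero).comp (by fun_prop) fun x hx => Set.mk_mem_prod hx ht)
      |>.differentiableAt (hD.mem_nhds hx₀D)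
  have hsurface := fderiv_apply_graph_eq_zero_of_eventually_zero
    ((hp.differentiableOn one_ne_zero).differentiableAt hq₀O) hslice
    (eventually_of_mem (hD.mem_nhds hx₀D) fun x hx => hdyn x hx t ht) n
  rw [fderiv_slice_apply_eq_partials, fderiv_apply_eq_partials] at hsurface
  have hmain : dY p q₀ * (gX1 η x₀ t * n.1 + gX2 η x₀ t * n.2) = 0 := by
    linear_combination hsurface - hnormal_grad
  exact ⟨hmain, fun hne => (mul_eq_zero.mp hmain).resolve_left hne⟩

/-- Free surface meeting a flat vertical wall: with the
horizontal momentum equation and impermeability `u·n = 0` on a wet-wall set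
`S ⊆ {x·n = c}`, and the dynamic condition `p(x, η(x,t), t) = 0` near `x₀` with
`x₀·n = c`, one has `p_y·(∇η·n) = 0` at the contact point; in particular, if
`p_y ≠ 0` there, the free surface meets the wall at a right angle: `∇η·n = 0`. -/
theorem free_surface_right_angle_flat_wall
    (ρ : ℝ) (hρ : 0 < ρ)
    (n : ℝ × ℝ) (hn : n.1 ^ 2 + n.2 ^ 2 = 1) (c : ℝ)
    (O : Set Pt) (hO : IsOpen O)
    (u : Pt → ℝ × ℝ) (v p : Pt → ℝ)
    (hu : ContDiffOn ℝ 1 u O) (hv : ContDiffOn ℝ 1 v O) (hp : ContDiffOn ℝ 1 p O)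
    (hmom1 : ∀ q ∈ O,
      ρ * (dT (fun z => (u z).1) q
        + (u q).1 * dX1 (fun z => (u z).1) q + (u q).2 * dX2 (fun z => (u z).1) q
        + v q * dY (fun z => (u z).1) q) + dX1 p q = 0)
    (hmom2 : ∀ q ∈ O,
      ρ * (dT (fun z => (u z).2) q
        + (u q).1 * dX1 (fun z => (u z).2) q + (u q).2 * dX2 (fun z => (u z).2) q
        + v q * dY (fun z => (u z).2) q) + dX2 p q = 0)
    (S : Set Pt) (hSO : S ⊆ O)
    (hSrel : ∃ U : Set Pt, IsOpen U ∧
      S = U ∩ {q : Pt | q.1.1 * n.1 + q.1.2 * n.2 = c})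
    (himp : ∀ q ∈ S, (u q).1 * n.1 + (u q).2 * n.2 = 0)
    -- the free surface `η` near the wall point `x₀`
    (x₀ : ℝ × ℝ) (hx₀ : x₀.1 * n.1 + x₀.2 * n.2 = c)
    (D : Set (ℝ × ℝ)) (hD : IsOpen D) (hx₀D : x₀ ∈ D)
    (I : Set ℝ) (hI : I.OrdConnected)
    (η : (ℝ × ℝ) × ℝ → ℝ) (hη : ContDiffOn ℝ 1 η (D ×ˢ I))
    (hsurfO : ∀ x ∈ D, ∀ t ∈ I, ((x, η (x, t), t) : Pt) ∈ O)
    -- the dynamic free-surface condition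
    (hdyn : ∀ x ∈ D, ∀ t ∈ I, p (x, η (x, t), t) = 0) :
    ∀ t ∈ I, ((x₀, η (x₀, t), t) : Pt) ∈ S →
      dY p (x₀, η (x₀, t), t) * (gX1 η x₀ t * n.1 + gX2 η x₀ t * n.2) = 0
      ∧ (dY p (x₀, η (x₀, t), t) ≠ 0 →
          gX1 η x₀ t * n.1 + gX2 η x₀ t * n.2 = 0) :=
  free_surface_right_angle_flat_wall_general ρ n c O hO u v p hu hp hmom1 hmom2 S hSrel himp x₀ D hD
    hx₀D I η hη hsurfO hdyn

end
end

section
/- Let u : U×I → ℝ² be C¹, f, g : U×I → ℝ be C², and Q : U×I → ℝ be C¹ with Q > 0 on an open set U ⊆ ℝ² times an interval I, with material derivative D(·) := (·)_t + u·∇(·). If the mass equation Q_t + div(Q u) = 0 holds (equivalently div u = −DQ/Q), then at every point: ∇f ∧ ∇(Dg) = Q·D((∇f ∧ ∇g)/Q) − ∇(Df) ∧ ∇g. -/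
noncomputable section

/-- Horizontal space-time points `((x₁,x₂), t)`. -/
abbrev Qt : Type := (ℝ × ℝ) × ℝ

/-- Partial derivative `∂_{x₁}`. -/
noncomputable def pX1 (f : Qt → ℝ) (q : Qt) : ℝ :=
  fderiv ℝ f q (((1 : ℝ), (0 : ℝ)), (0 : ℝ))

/-- Partial derivative `∂_{x₂}`. -/
noncomputable def pX2 (f : Qt → ℝ) (q : Qt) : ℝ :=
  fderiv ℝ f q (((0 : ℝ), (1 : ℝ)), (0 : ℝ))

/-- Partial derivative `∂_t`. -/
noncomputable def pT (f : Qt → ℝ) (q : Qt) : ℝ :=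
  fderiv ℝ f q (((0 : ℝ), (0 : ℝ)), (1 : ℝ))

/-- Horizontal divergence of a plane vector field. -/
noncomputable def divV (w : Qt → ℝ × ℝ) (q : Qt) : ℝ :=
  pX1 (fun z => (w z).1) q + pX2 (fun z => (w z).2) q

/-- Material derivative `Df := f_t + u·∇f`. -/
noncomputable def matD (u : Qt → ℝ × ℝ) (f : Qt → ℝ) (q : Qt) : ℝ :=
  pT f q + (u q).1 * pX1 f q + (u q).2 * pX2 f q

/-- Wedge of spatial gradients `∇f ∧ ∇g := f_{x₁} g_{x₂} − f_{x₂} g_{x₁}`. -/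
noncomputable def wedgeGrad (f g : Qt → ℝ) (q : Qt) : ℝ :=
  pX1 f q * pX2 g q - pX2 f q * pX1 g q

/-! The spatial partials do not commute with `D`: by symmetry of second derivatives,
`∂ᵢ(Dg) = D(∂ᵢg) + (∂ᵢu)·∇g`. As `D` is a derivation, the two commutator terms in
`∇f ∧ ∇(Dg) + ∇(Df) ∧ ∇g` add up to `(div u)(∇f ∧ ∇g)`, so that this sum equals
`DJ + (div u) J` for `J = ∇f ∧ ∇g`. The mass equation says `DQ = -Q div u`, and by the quotient
rule `Q·D(J/Q) = DJ - J·DQ/Q` is the same expression. -/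

open Topology

section SecondDerivative

variable {E F : Type*} [NormedAddCommGroup E] [NormedSpace ℝ E]
  [NormedAddCommGroup F] [NormedSpace ℝ F]

variable {g : E → F} {q : E}

theorem ContDiffAt.differentiableAt_fderiv (hg : ContDiffAt ℝ 2 g q) :
    DifferentiableAt ℝ (fderiv ℝ g) q :=
  (hg.fderiv_right (m := 1) (by norm_num)).differentiableAt one_ne_zero

theorem ContDiffAt.differentiableAt_fderiv_apply (hg : ContDiffAt ℝ 2 g q) (v : E) :
    DifferentiableAt ℝ (fun z => fderiv ℝ g z v) q :=
  hg.differentiableAt_fderiv.clm_apply (differentiableAt_const v)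

theorem fderiv_fderiv_apply_field {W : E → E} (hg : ContDiffAt ℝ 2 g q)
    (hW : DifferentiableAt ℝ W q) (v : E) :
    fderiv ℝ (fun z => fderiv ℝ g z (W z)) q v
      = fderiv ℝ (fun z => fderiv ℝ g z v) q (W q) + fderiv ℝ g q (fderiv ℝ W q v) := by
  have hsymm := hg.isSymmSndFDerivAt (by simp [minSmoothness_of_isRCLikeNormedField]) v (W q)
  rw [fderiv_clm_apply hg.differentiableAt_fderiv hW,
    fderiv_clm_apply hg.differentiableAt_fderiv (differentiableAt_const v)]
  simp [hsymm, add_comm]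

end SecondDerivative

theorem fderiv_apply_eq_partials_s13 (f : Qt → ℝ) (q : Qt) (w : ℝ × ℝ) (c : ℝ) :
    fderiv ℝ f q (w, c) = w.1 * pX1 f q + w.2 * pX2 f q + c * pT f q := by
  have hv : ((w, c) : Qt) = w.1 • ((1, 0), 0) + w.2 • ((0, 1), 0) + c • ((0, 0), 1) := by
    ext <;> simp
  rw [hv, map_add, map_add, map_smul, map_smul, map_smul]
  simp only [pX1, pX2, pT, smul_eq_mul]

theorem matD_eq_fderiv_apply (u : Qt → ℝ × ℝ) (f : Qt → ℝ) (q : Qt) :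
    matD u f q = fderiv ℝ f q (u q, 1) := by
  rw [matD, fderiv_apply_eq_partials_s13]
  ring

section Partials

variable {f g : Qt → ℝ} {q : Qt}

theorem ContDiffAt.differentiableAt_pX1 (hf : ContDiffAt ℝ 2 f q) :
    DifferentiableAt ℝ (pX1 f) q :=
  hf.differentiableAt_fderiv_apply _

theorem ContDiffAt.differentiableAt_pX2 (hf : ContDiffAt ℝ 2 f q) :
    DifferentiableAt ℝ (pX2 f) q :=
  hf.differentiableAt_fderiv_apply _

theorem ContDiffAt.differentiableAt_wedgeGrad (hf : ContDiffAt ℝ 2 f q)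
    (hg : ContDiffAt ℝ 2 g q) : DifferentiableAt ℝ (wedgeGrad f g) q :=
  (hf.differentiableAt_pX1.fun_mul hg.differentiableAt_pX2).fun_sub
    (hf.differentiableAt_pX2.fun_mul hg.differentiableAt_pX1)

end Partials

section MaterialDerivative

variable {u : Qt → ℝ × ℝ} {q : Qt}

theorem matD_mul {a b : Qt → ℝ} (ha : DifferentiableAt ℝ a q) (hb : DifferentiableAt ℝ b q) :
    matD u (fun z => a z * b z) q = matD u a q * b q + a q * matD u b q := by
  simp only [matD_eq_fderiv_apply, fderiv_fun_mul ha hb, add_apply, smul_apply, smul_eq_mul]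
  ring

theorem matD_sub {a b : Qt → ℝ} (ha : DifferentiableAt ℝ a q) (hb : DifferentiableAt ℝ b q) :
    matD u (fun z => a z - b z) q = matD u a q - matD u b q := by
  simp only [matD_eq_fderiv_apply, fderiv_fun_sub ha hb, sub_apply]

theorem mul_matD_div {a b : Qt → ℝ} (ha : DifferentiableAt ℝ a q) (hb : DifferentiableAt ℝ b q)
    (hb₀ : b q ≠ 0) :
    b q * matD u (fun z => a z / b z) q = matD u a q - a q / b q * matD u b q := by
  have hab : DifferentiableAt ℝ (fun z => a z / b z) q := by fun_prop (disch := assumption)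
  have hev : (fun z => a z / b z * b z) =ᶠ[𝓝 q] a := by
    filter_upwards [hb.continuousAt.eventually_ne hb₀] with z hz using div_mul_cancel₀ _ hz
  have hprod := matD_mul (u := u) hab hb
  rw [matD_eq_fderiv_apply u (fun z => a z / b z * b z), hev.fderiv_eq,
    ← matD_eq_fderiv_apply] at hprod
  rw [hprod]
  ring

theorem fderiv_matD_apply {g : Qt → ℝ} (hu : DifferentiableAt ℝ u q) (hg : ContDiffAt ℝ 2 g q)
    (v : Qt) :
    fderiv ℝ (matD u g) q v = matD u (fun z => fderiv ℝ g z v) q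
      + fderiv ℝ (fun z => (u z).1) q v * pX1 g q + fderiv ℝ (fun z => (u z).2) q v * pX2 g q := by
  have hW : DifferentiableAt ℝ (fun z => (u z, (1 : ℝ))) q := hu.prodMk (differentiableAt_const _)
  rw [show matD u g = fun z => fderiv ℝ g z (u z, 1) from funext (matD_eq_fderiv_apply u g),
    fderiv_fderiv_apply_field hg hW, ← matD_eq_fderiv_apply,
    hu.fderiv_prodMk (differentiableAt_const _), fderiv.fst hu, fderiv.snd hu,
    fderiv_apply_eq_partials_s13]
  simp only [ContinuousLinearMap.prod_apply, fderiv_const_apply, zero_apply,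
    ContinuousLinearMap.coe_comp, Function.comp_apply, ContinuousLinearMap.coe_fst',
    ContinuousLinearMap.coe_snd']
  ring

theorem pX1_matD {g : Qt → ℝ} (hu : DifferentiableAt ℝ u q) (hg : ContDiffAt ℝ 2 g q) :
    pX1 (matD u g) q = matD u (pX1 g) q
      + pX1 (fun z => (u z).1) q * pX1 g q + pX1 (fun z => (u z).2) q * pX2 g q :=
  fderiv_matD_apply hu hg _

theorem pX2_matD {g : Qt → ℝ} (hu : DifferentiableAt ℝ u q) (hg : ContDiffAt ℝ 2 g q) :
    pX2 (matD u g) q = matD u (pX2 g) q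
      + pX2 (fun z => (u z).1) q * pX1 g q + pX2 (fun z => (u z).2) q * pX2 g q :=
  fderiv_matD_apply hu hg _

end MaterialDerivative

theorem wedgeGrad_matD_add_wedgeGrad_matD {u : Qt → ℝ × ℝ} {f g : Qt → ℝ} {q : Qt}
    (hu : DifferentiableAt ℝ u q) (hf : ContDiffAt ℝ 2 f q) (hg : ContDiffAt ℝ 2 g q) :
    wedgeGrad f (matD u g) q + wedgeGrad (matD u f) g q
      = matD u (wedgeGrad f g) q + divV u q * wedgeGrad f g q := by
  have hf₁ := hf.differentiableAt_pX1
  have hf₂ := hf.differentiableAt_pX2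
  have hg₁ := hg.differentiableAt_pX1
  have hg₂ := hg.differentiableAt_pX2
  have hJ : matD u (wedgeGrad f g) q = matD u (pX1 f) q * pX2 g q + pX1 f q * matD u (pX2 g) q
      - (matD u (pX2 f) q * pX1 g q + pX2 f q * matD u (pX1 g) q) := by
    rw [show wedgeGrad f g = fun z => pX1 f z * pX2 g z - pX2 f z * pX1 g z from rfl,
      matD_sub (hf₁.fun_mul hg₂) (hf₂.fun_mul hg₁), matD_mul hf₁ hg₂, matD_mul hf₂ hg₁]
  rw [hJ, wedgeGrad, wedgeGrad, wedgeGrad, divV, pX1_matD hu hf, pX2_matD hu hf, pX1_matD hu hg,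
    pX2_matD hu hg]
  ring

theorem matD_eq_neg_mul_divV_of_mass {u : Qt → ℝ × ℝ} {Q : Qt → ℝ} {q : Qt}
    (hu : DifferentiableAt ℝ u q) (hQ : DifferentiableAt ℝ Q q)
    (hmass : pT Q q + pX1 (fun z => Q z * (u z).1) q + pX2 (fun z => Q z * (u z).2) q = 0) :
    matD u Q q = -(Q q * divV u q) := by
  simp only [matD, divV, pX1, pX2] at hmass ⊢
  simp only [fderiv_fun_mul hQ hu.fst, fderiv_fun_mul hQ hu.snd, add_apply, smul_apply,
    smul_eq_mul] at hmass
  linear_combination hmass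

theorem wedge_gradient_mass_identity_general
    (U : Set (ℝ × ℝ)) (hU : IsOpen U)
    (I : Set ℝ) (hIopen : IsOpen I)
    (u : Qt → ℝ × ℝ) (f g Q : Qt → ℝ)
    (hu : ContDiffOn ℝ 1 u (U ×ˢ I))
    (hf : ContDiffOn ℝ 2 f (U ×ˢ I)) (hg : ContDiffOn ℝ 2 g (U ×ˢ I))
    (hQ : ContDiffOn ℝ 1 Q (U ×ˢ I))
    (hQpos : ∀ q ∈ U ×ˢ I, 0 < Q q)
    (hmass : ∀ q ∈ U ×ˢ I,
      pT Q q + pX1 (fun z => Q z * (u z).1) q + pX2 (fun z => Q z * (u z).2) q = 0) :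
    ∀ q ∈ U ×ˢ I,
      wedgeGrad f (fun z => matD u g z) q =
        Q q * matD u (fun z => wedgeGrad f g z / Q z) q
          - wedgeGrad (fun z => matD u f z) g q := by
  intro q hq
  have hnhds : U ×ˢ I ∈ 𝓝 q := (hU.prod hIopen).mem_nhds hq
  have hfq := (hf q hq).contDiffAt hnhds
  have hgq := (hg q hq).contDiffAt hnhds
  have huq := ((hu q hq).contDiffAt hnhds).differentiableAt one_ne_zero
  have hQq := ((hQ q hq).contDiffAt hnhds).differentiableAt one_ne_zero
  have hQ₀ : Q q ≠ 0 := (hQpos q hq).ne'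
  rw [mul_matD_div (hfq.differentiableAt_wedgeGrad hgq) hQq hQ₀,
    matD_eq_neg_mul_divV_of_mass huq hQq (hmass q hq), eq_sub_iff_add_eq,
    wedgeGrad_matD_add_wedgeGrad_matD huq hfq hgq]
  field_simp
  ring

/-- For C² scalar fields `f, g`, a C¹ velocity `u` and a
positive C¹ field `Q` satisfying the mass equation `Q_t + div(Qu) = 0`, one has
`∇f ∧ ∇(Dg) = Q·D((∇f ∧ ∇g)/Q) − ∇(Df) ∧ ∇g`. -/
theorem wedge_gradient_mass_identity
    (U : Set (ℝ × ℝ)) (hU : IsOpen U)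
    (I : Set ℝ) (hIopen : IsOpen I) (hIord : I.OrdConnected)
    (u : Qt → ℝ × ℝ) (f g Q : Qt → ℝ)
    (hu : ContDiffOn ℝ 1 u (U ×ˢ I))
    (hf : ContDiffOn ℝ 2 f (U ×ˢ I)) (hg : ContDiffOn ℝ 2 g (U ×ˢ I))
    (hQ : ContDiffOn ℝ 1 Q (U ×ˢ I))
    (hQpos : ∀ q ∈ U ×ˢ I, 0 < Q q)
    (hmass : ∀ q ∈ U ×ˢ I,
      pT Q q + pX1 (fun z => Q z * (u z).1) q + pX2 (fun z => Q z * (u z).2) q = 0) :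
    ∀ q ∈ U ×ˢ I,
      wedgeGrad f (fun z => matD u g z) q =
        Q q * matD u (fun z => wedgeGrad f g z / Q z) q
          - wedgeGrad (fun z => matD u f z) g q :=
  wedge_gradient_mass_identity_general U hU I hIopen u f g Q hu hf hg hQ hQpos hmass

end
end

section
/- Let h, d : U×I → ℝ be C² with Q := d + h > 0, let u̲ : U×I → ℝ² be C² with material derivative D(·) := (·)_t + u̲·∇(·), and suppose the mass equation Q_t + div(Q u̲) = 0 holds (so div u̲ = −DQ/Q). Define δω := (Q/3)·(∇Q ∧ ∇(div u̲)) + (1/2)·(∇(Q·div u̲) ∧ ∇h) + (1/2)·(∇(Q − 2h) ∧ ∇(Dh)). Then at every point: δω = (1/6)·[∇h ∧ ∇(D(d − 2h)) + ∇d ∧ ∇(D(h − 2d))]. In particular, δω ≡ 0 whenever h and d are spatially constant, i.e. h = h(t) and d = d(t). -/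
noncomputable section

/-- The vorticity correction
`δω := (Q/3)(∇Q ∧ ∇div u̲) + ½ ∇(Q div u̲) ∧ ∇h + ½ ∇(Q−2h) ∧ ∇(Dh)`. -/
noncomputable def deltaOmega (u : Qt → ℝ × ℝ) (h d : Qt → ℝ) (q : Qt) : ℝ :=
  (d q + h q) / 3 * wedgeGrad (fun z => d z + h z) (fun z => divV u z) q
    + (1 / 2) * wedgeGrad (fun z => (d z + h z) * divV u z) h q
    + (1 / 2) * wedgeGrad (fun z => (d z + h z) - 2 * h z) (fun z => matD u h z) q

/-! The mass equation is `Q div u̲ = -D Q` on an open set, so `∇(Q div u̲) = -∇(D Q)` and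
`Q ∇(div u̲) = -∇(D Q) - (div u̲) ∇Q`. Substituting these and `D(f - 2g) = Df - 2 Dg` turns both
sides into bilinear expressions in `∇h, ∇d, ∇(Dh), ∇(Dd)` (using `∇Q ∧ ∇Q = 0`), whose
coefficients agree. -/

open Topology

lemma ContDiffOn.fderiv_apply_of_isOpen {E F : Type*} [NormedAddCommGroup E] [NormedSpace ℝ E]
    [NormedAddCommGroup F] [NormedSpace ℝ F] {f : E → F} {s : Set E} {m n : WithTop ℕ∞}
    (hf : ContDiffOn ℝ n f s) (hs : IsOpen s) (hmn : m + 1 ≤ n) (v : E) :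
    ContDiffOn ℝ m (fun z => fderiv ℝ f z v) s :=
  (ContinuousLinearMap.apply ℝ F v).contDiff.comp_contDiffOn (hf.fderiv_of_isOpen hs hmn)

section Calculus

variable {u : Qt → ℝ × ℝ} {f g : Qt → ℝ} {z : Qt}

lemma matD_add (hf : DifferentiableAt ℝ f z) (hg : DifferentiableAt ℝ g z) :
    matD u (fun w => f w + g w) z = matD u f z + matD u g z := by
  simp only [matD, pT, pX1, pX2, fderiv_fun_add hf hg, add_apply]
  ring

lemma matD_sub_const_mul (hf : DifferentiableAt ℝ f z) (hg : DifferentiableAt ℝ g z) (c : ℝ) :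
    matD u (fun w => f w - c * g w) z = matD u f z - c * matD u g z := by
  simp only [matD, pT, pX1, pX2, fderiv_fun_sub hf (hg.const_mul c), fderiv_const_mul hg,
    sub_apply, smul_apply, smul_eq_mul]
  ring

lemma pT_add_pX1_mul_add_pX2_mul (hf : DifferentiableAt ℝ f z) (hu : DifferentiableAt ℝ u z) :
    pT f z + pX1 (fun w => f w * (u w).1) z + pX2 (fun w => f w * (u w).2) z
      = matD u f z + f z * divV u z := by
  simp only [matD, divV, pX1, pX2, fderiv_fun_mul hf hu.fst, fderiv_fun_mul hf hu.snd,
    add_apply, smul_apply, smul_eq_mul]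
  ring

end Calculus

section Regularity

variable {s : Set Qt} {u : Qt → ℝ × ℝ} {f : Qt → ℝ}

lemma ContDiffOn.divV (hu : ContDiffOn ℝ 2 u s) (hs : IsOpen s) :
    ContDiffOn ℝ 1 (divV u) s :=
  (hu.fst.fderiv_apply_of_isOpen hs le_rfl _).add (hu.snd.fderiv_apply_of_isOpen hs le_rfl _)

lemma ContDiffOn.matD (hf : ContDiffOn ℝ 2 f s) (hu : ContDiffOn ℝ 2 u s) (hs : IsOpen s) :
    ContDiffOn ℝ 1 (matD u f) s :=
  ((hf.fderiv_apply_of_isOpen hs le_rfl _).add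
    ((hu.fst.of_le one_le_two).mul (hf.fderiv_apply_of_isOpen hs le_rfl _))).add
    ((hu.snd.of_le one_le_two).mul (hf.fderiv_apply_of_isOpen hs le_rfl _))

end Regularity

section Gradients

variable {s : Set Qt} {u : Qt → ℝ × ℝ} {f g h d : Qt → ℝ} {q : Qt}

lemma fderiv_matD_sub_const_mul (hs : IsOpen s) (hf : DifferentiableOn ℝ f s)
    (hg : DifferentiableOn ℝ g s) (hDf : DifferentiableAt ℝ (matD u f) q)
    (hDg : DifferentiableAt ℝ (matD u g) q) (hq : q ∈ s) (c : ℝ) :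
    fderiv ℝ (fun z => matD u (fun w => f w - c * g w) z) q
      = fderiv ℝ (matD u f) q - c • fderiv ℝ (matD u g) q := by
  have hlin : (fun z => matD u (fun w => f w - c * g w) z) =ᶠ[𝓝 q]
      fun z => matD u f z - c * matD u g z := by
    filter_upwards [hs.mem_nhds hq] with z hz
    exact matD_sub_const_mul ((hf z hz).differentiableAt (hs.mem_nhds hz))
      ((hg z hz).differentiableAt (hs.mem_nhds hz)) c
  rw [hlin.fderiv_eq, fderiv_fun_sub hDf (hDg.const_mul c), fderiv_const_mul hDg]

lemma fderiv_mul_divV_of_mass (hs : IsOpen s) (hd : DifferentiableOn ℝ d s)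
    (hh : DifferentiableOn ℝ h s) (hu : DifferentiableOn ℝ u s)
    (hDd : DifferentiableAt ℝ (matD u d) q) (hDh : DifferentiableAt ℝ (matD u h) q)
    (hmass : ∀ z ∈ s, pT (fun z => d z + h z) z + pX1 (fun z => (d z + h z) * (u z).1) z
        + pX2 (fun z => (d z + h z) * (u z).2) z = 0) (hq : q ∈ s) :
    fderiv ℝ (fun z => (d z + h z) * divV u z) q
      = -(fderiv ℝ (matD u d) q + fderiv ℝ (matD u h) q) := by
  have hQdiv : (fun z => (d z + h z) * divV u z) =ᶠ[𝓝 q]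
      fun z => -(matD u d z + matD u h z) := by
    filter_upwards [hs.mem_nhds hq] with z hz
    have hzs := hs.mem_nhds hz
    have hdz := (hd z hz).differentiableAt hzs
    have hhz := (hh z hz).differentiableAt hzs
    have := hmass z hz
    rw [pT_add_pX1_mul_add_pX2_mul (f := fun w => d w + h w) (hdz.add hhz)
      ((hu z hz).differentiableAt hzs), matD_add hdz hhz] at this
    linear_combination this
  rw [hQdiv.fderiv_eq, fderiv_fun_neg, fderiv_fun_add hDd hDh]

end Gradients

theorem deltaOmega_eq_of_mass {s : Set Qt} {u : Qt → ℝ × ℝ} {h d : Qt → ℝ} {q : Qt}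
    (hs : IsOpen s) (hh : ContDiffOn ℝ 2 h s) (hd : ContDiffOn ℝ 2 d s)
    (hu : ContDiffOn ℝ 2 u s)
    (hmass : ∀ z ∈ s, pT (fun z => d z + h z) z + pX1 (fun z => (d z + h z) * (u z).1) z
        + pX2 (fun z => (d z + h z) * (u z).2) z = 0) (hq : q ∈ s) :
    deltaOmega u h d q =
      (1 / 6) * (wedgeGrad h (fun z => matD u (fun w => d w - 2 * h w) z) q
               + wedgeGrad d (fun z => matD u (fun w => h w - 2 * d w) z) q) := by
  have hqs := hs.mem_nhds hq
  have hh₁ := hh.differentiableOn two_ne_zero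
  have hd₁ := hd.differentiableOn two_ne_zero
  have hhq := hh₁.differentiableAt hqs
  have hdq := hd₁.differentiableAt hqs
  have hDh := ((hh.matD hu hs).differentiableOn one_ne_zero).differentiableAt hqs
  have hDd := ((hd.matD hu hs).differentiableOn one_ne_zero).differentiableAt hqs
  have hdiv := ((hu.divV hs).differentiableOn one_ne_zero).differentiableAt hqs
  have hQq : DifferentiableAt ℝ (fun z => d z + h z) q := hdq.add hhq
  have hQ : fderiv ℝ (fun z => d z + h z) q = fderiv ℝ d q + fderiv ℝ h q :=
    fderiv_fun_add hdq hhq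
  have hQ2h : fderiv ℝ (fun z => d z + h z - 2 * h z) q
      = fderiv ℝ d q + fderiv ℝ h q - (2 : ℝ) • fderiv ℝ h q := by
    rw [fderiv_fun_sub hQq (hhq.const_mul 2), fderiv_const_mul hhq, hQ]
  have hflux := fderiv_mul_divV_of_mass hs hd₁ hh₁ (hu.differentiableOn two_ne_zero) hDd hDh
    hmass hq
  have hQdiv : (d q + h q) • fderiv ℝ (divV u) q = -(fderiv ℝ (matD u d) q
      + fderiv ℝ (matD u h) q) - divV u q • (fderiv ℝ d q + fderiv ℝ h q) := by
    rw [← hQ, ← hflux, fderiv_fun_mul hQq hdiv]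
    abel
  have hDdh := fderiv_matD_sub_const_mul hs hd₁ hh₁ hDd hDh hq 2
  have hDhd := fderiv_matD_sub_const_mul hs hh₁ hd₁ hDh hDd hq 2
  have hQdiv₁ := congrArg (fun L : Qt →L[ℝ] ℝ => L ((1, 0), 0)) hQdiv
  have hQdiv₂ := congrArg (fun L : Qt →L[ℝ] ℝ => L ((0, 1), 0)) hQdiv
  simp only [add_apply, sub_apply, neg_apply, smul_apply, smul_eq_mul] at hQdiv₁ hQdiv₂
  simp only [deltaOmega, wedgeGrad, pX1, pX2, hQ, hQ2h, hflux, hDdh, hDhd, add_apply, sub_apply,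
    neg_apply, smul_apply, smul_eq_mul]
  linear_combination (fderiv ℝ d q ((1, 0), 0) + fderiv ℝ h q ((1, 0), 0)) / 3 * hQdiv₂
    - (fderiv ℝ d q ((0, 1), 0) + fderiv ℝ h q ((0, 1), 0)) / 3 * hQdiv₁

theorem delta_omega_simplification_general
    (U : Set (ℝ × ℝ)) (hU : IsOpen U)
    (I : Set ℝ) (hIopen : IsOpen I)
    (h d : Qt → ℝ) (u : Qt → ℝ × ℝ)
    (hh : ContDiffOn ℝ 2 h (U ×ˢ I)) (hd : ContDiffOn ℝ 2 d (U ×ˢ I))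
    (hu : ContDiffOn ℝ 2 u (U ×ˢ I))
    (hmass : ∀ q ∈ U ×ˢ I,
      pT (fun z => d z + h z) q
        + pX1 (fun z => (d z + h z) * (u z).1) q
        + pX2 (fun z => (d z + h z) * (u z).2) q = 0) :
    ∀ q ∈ U ×ˢ I,
      deltaOmega u h d q =
        (1 / 6) * (wedgeGrad h (fun z => matD u (fun w => d w - 2 * h w) z) q
                 + wedgeGrad d (fun z => matD u (fun w => h w - 2 * d w) z) q)
      ∧ (pX1 h q = 0 → pX2 h q = 0 → pX1 d q = 0 → pX2 d q = 0 →
          deltaOmega u h d q = 0) := by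
  intro q hq
  have hδω := deltaOmega_eq_of_mass (hU.prod hIopen) hh hd hu hmass hq
  refine ⟨hδω, fun hh₁ hh₂ hd₁ hd₂ => ?_⟩
  rw [hδω, wedgeGrad, wedgeGrad, hh₁, hh₂, hd₁, hd₂]
  ring

/-- Under the mass equation `Q_t + div(Q u̲) = 0` (with
`Q = d + h > 0`), the vorticity correction `δω` simplifies to
`δω = (1/6)[∇h ∧ ∇(D(d − 2h)) + ∇d ∧ ∇(D(h − 2d))]`; in particular it
vanishes wherever `h` and `d` are spatially constant. -/
theorem delta_omega_simplification
    (U : Set (ℝ × ℝ)) (hU : IsOpen U)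
    (I : Set ℝ) (hIopen : IsOpen I) (hIord : I.OrdConnected)
    (h d : Qt → ℝ) (u : Qt → ℝ × ℝ)
    (hh : ContDiffOn ℝ 2 h (U ×ˢ I)) (hd : ContDiffOn ℝ 2 d (U ×ˢ I))
    (hu : ContDiffOn ℝ 2 u (U ×ˢ I))
    (hQpos : ∀ q ∈ U ×ˢ I, 0 < d q + h q)
    (hmass : ∀ q ∈ U ×ˢ I,
      pT (fun z => d z + h z) q
        + pX1 (fun z => (d z + h z) * (u z).1) q
        + pX2 (fun z => (d z + h z) * (u z).2) q = 0) :
    ∀ q ∈ U ×ˢ I,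
      deltaOmega u h d q =
        (1 / 6) * (wedgeGrad h (fun z => matD u (fun w => d w - 2 * h w) z) q
                 + wedgeGrad d (fun z => matD u (fun w => h w - 2 * d w) z) q)
      ∧ (pX1 h q = 0 → pX2 h q = 0 → pX1 d q = 0 → pX2 d q = 0 →
          deltaOmega u h d q = 0) :=
  delta_omega_simplification_general U hU I hIopen h d u hh hd hu hmass

end
end
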